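/- For all real λ > 0 and μ > 0, every real φ, all complex y₁ and y₂, and every integer n ≥ 0, the Meixner–Pollaczek polynomials satisfy the convolution identity P_n^{(λ+μ)}(y₁+y₂; φ) = Σ_{k=0}^n P_k^{(λ)}(y₁; φ) · P_{n−k}^{(μ)}(y₂; φ). -/

import Mathlib

/-!
With `a = λ + iy`, `b = λ - iy` and `z = e^{iφ}`, Pfaff's transformation of the terminating
`₂F₁(-n, a; 2λ; 1 - z⁻²)` rewrites `P_n^{(λ)}(y; φ)` as
`Σ_m (a)_m (b)_{n-m} z^{n-2m} / (m! (n-m)!)`, the coefficient of `tⁿ` in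
`(1 - t/z)^{-a} (1 - z t)^{-b}`. By Chu–Vandermonde the series `(1 - t)^{-c} = Σ_m (c)_m tᵐ / m!`
is multiplicative in `c`, while `a` and `b` are additive in `(λ, y)`; so the generating function
of `λ + μ, y₁ + y₂` is the product of those of `λ, y₁` and `μ, y₂`, and the convolution identity
is the comparison of coefficients of `tⁿ`.
-/

/-- The Pochhammer symbol `(a)_k = a (a+1) ⋯ (a+k-1)` for complex `a`. -/
noncomputable def pochC (a : ℂ) (k : ℕ) : ℂ := ∏ i ∈ Finset.range k, (a + i)

/-- The Meixner–Pollaczek polynomial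
`P_n^{(λ)}(y; φ) = ((2λ)_n / n!) e^{inφ}
  Σ_{k=0}^n [((-n)_k (λ + iy)_k) / ((2λ)_k k!)] (1 - e^{-2iφ})^k`. -/
noncomputable def meixnerPollaczek (n : ℕ) (lam φ : ℝ) (y : ℂ) : ℂ :=
  pochC (2 * lam) n / (n.factorial : ℂ) * Complex.exp ((n : ℂ) * φ * Complex.I) *
    ∑ k ∈ Finset.range (n + 1),
      pochC (-(n : ℂ)) k * pochC ((lam : ℂ) + Complex.I * y) k /
        (pochC (2 * lam) k * (k.factorial : ℂ)) *
        (1 - Complex.exp (-(2 * (φ : ℂ) * Complex.I))) ^ k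

open Finset Polynomial

lemma pochC_succ (a : ℂ) (k : ℕ) : pochC a (k + 1) = pochC a k * (a + k) :=
  prod_range_succ _ _

lemma pochC_add (a : ℂ) (k m : ℕ) : pochC a (k + m) = pochC a k * pochC (a + k) m := by
  simp [pochC, prod_range_add, add_assoc]

lemma pochC_eq_ascPochhammer_eval (a : ℂ) (k : ℕ) : pochC a k = (ascPochhammer ℂ k).eval a := by
  induction k with
  | zero => simp [pochC]
  | succ k ih => rw [pochC_succ, ascPochhammer_succ_eval, ih]

lemma pochC_eq_descPochhammer_smeval (a : ℂ) (k : ℕ) :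
    pochC a k = (-1) ^ k * (descPochhammer ℤ k).smeval (-a) := by
  rw [pochC_eq_ascPochhammer_eval, ← ascPochhammer_smeval_eq_eval, ← neg_neg a,
    ascPochhammer_smeval_neg_eq_descPochhammer, neg_neg, Units.smul_def, zsmul_eq_mul,
    Int.cast_negOnePow, zpow_natCast]

lemma pochC_neg_natCast (n k : ℕ) : pochC (-n) k = (-1) ^ k * (k.factorial * n.choose k) := by
  rw [pochC_eq_descPochhammer_smeval, neg_neg, descPochhammer_smeval_eq_descFactorial,
    Nat.descFactorial_eq_factorial_mul_choose]
  push_cast; ring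

lemma pochC_add_eq_sum (a b : ℂ) (N : ℕ) :
    pochC (a + b) N = ∑ m ∈ range (N + 1), N.choose m * pochC a m * pochC b (N - m) := by
  rw [pochC_eq_descPochhammer_smeval, neg_add,
    Ring.descPochhammer_smeval_add _ (Commute.all _ _), mul_sum,
    Nat.sum_antidiagonal_eq_sum_range_succ_mk]
  refine sum_congr rfl fun m hm => ?_
  have hsign : (-1 : ℂ) ^ N = (-1) ^ m * (-1) ^ (N - m) := by
    rw [← pow_add, Nat.add_sub_cancel' (mem_range_succ_iff.mp hm)]
  simp only [pochC_eq_descPochhammer_smeval, hsign]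
  ring

-- Pfaff's transformation of a terminating `₂F₁`, cleared of denominators.
lemma sum_choose_mul_pochC_mul_add_one_pow (a b u : ℂ) (n : ℕ) :
    ∑ j ∈ range (n + 1), n.choose j * pochC a j * pochC b (n - j) * (u + 1) ^ j =
      ∑ k ∈ range (n + 1), n.choose k * pochC a k * pochC (a + b + k) (n - k) * u ^ k := by
  calc _ = ∑ j ∈ range (n + 1), ∑ k ∈ range (j + 1),
        n.choose j * pochC a j * pochC b (n - j) * (u ^ k * j.choose k) := by
          simp only [add_pow, one_pow, mul_one, mul_sum]
    _ = ∑ k ∈ range (n + 1), ∑ j ∈ Ico k (n + 1),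
        n.choose j * pochC a j * pochC b (n - j) * (u ^ k * j.choose k) :=
          sum_comm' fun j k => by simp only [mem_range, mem_Ico]; omega
    _ = ∑ k ∈ range (n + 1), n.choose k * pochC a k * u ^ k * ∑ i ∈ range (n - k + 1),
        (n - k).choose i * pochC (a + k) i * pochC b (n - k - i) := by
          refine sum_congr rfl fun k hk => ?_
          have hkn : k ≤ n := mem_range_succ_iff.mp hk
          rw [sum_Ico_eq_sum_range, Nat.sub_add_comm hkn, mul_sum]
          refine sum_congr rfl fun i _ => ?_
          have hchoose :
              (n.choose (k + i) * (k + i).choose k : ℂ) = n.choose k * (n - k).choose i := by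
            exact_mod_cast (by simpa using Nat.choose_mul (n := n) (Nat.le_add_right k i))
          rw [pochC_add, Nat.sub_add_eq]
          linear_combination (pochC a k * pochC (a + k) i * pochC b (n - k - i) * u ^ k) * hchoose
    _ = _ := by
          refine sum_congr rfl fun k _ => ?_
          rw [add_right_comm, pochC_add_eq_sum]
          ring

lemma pochC_ne_zero_of_re_pos {a : ℂ} (ha : 0 < a.re) (k : ℕ) : pochC a k ≠ 0 :=
  prod_ne_zero_iff.mpr fun i _ => ne_of_apply_ne Complex.re <| by
    simp only [Complex.add_re, Complex.natCast_re, Complex.zero_re]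
    positivity

lemma meixnerPollaczek_eq_sum {lam : ℝ} (hlam : 0 < lam) (φ : ℝ) (y : ℂ) (n : ℕ) :
    meixnerPollaczek n lam φ y =
      Complex.exp (n * φ * Complex.I) / n.factorial *
        ∑ k ∈ range (n + 1), n.choose k * pochC (lam + Complex.I * y) k *
          pochC (2 * lam + k) (n - k) * (Complex.exp (-(2 * φ * Complex.I)) - 1) ^ k := by
  rw [meixnerPollaczek, mul_sum, mul_sum]
  refine sum_congr rfl fun k hk => ?_
  have hsplit : pochC (2 * lam) n = pochC (2 * lam) k * pochC (2 * lam + k) (n - k) := by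
    rw [← pochC_add, Nat.add_sub_cancel' (mem_range_succ_iff.mp hk)]
  have h2lam : pochC (2 * lam) k ≠ 0 := pochC_ne_zero_of_re_pos (by simpa using hlam) k
  have hpow : (Complex.exp (-(2 * φ * Complex.I)) - 1) ^ k =
      (-1) ^ k * (1 - Complex.exp (-(2 * φ * Complex.I))) ^ k := by
    rw [← mul_pow, neg_one_mul, neg_sub]
  rw [pochC_neg_natCast, hsplit, hpow]
  field_simp [Nat.factorial_ne_zero]

noncomputable def pochSeries (c : ℂ) : PowerSeries ℂ :=
  PowerSeries.mk fun m => pochC c m / m.factorial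

lemma pochSeries_add (c d : ℂ) : pochSeries (c + d) = pochSeries c * pochSeries d := by
  ext n
  rw [PowerSeries.coeff_mul, Nat.sum_antidiagonal_eq_sum_range_succ_mk]
  simp only [pochSeries, PowerSeries.coeff_mk, pochC_add_eq_sum, sum_div]
  refine sum_congr rfl fun m hm => ?_
  rw [Nat.cast_choose ℂ (mem_range_succ_iff.mp hm)]
  field_simp [Nat.factorial_ne_zero]

lemma coeff_rescale_pochSeries_mul (a b z z' : ℂ) (n : ℕ) :
    PowerSeries.coeff n
        (PowerSeries.rescale z (pochSeries a) * PowerSeries.rescale z' (pochSeries b)) =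
      (∑ m ∈ range (n + 1), n.choose m * pochC a m * pochC b (n - m) * z ^ m * z' ^ (n - m)) /
        n.factorial := by
  rw [PowerSeries.coeff_mul, Nat.sum_antidiagonal_eq_sum_range_succ_mk, sum_div]
  refine sum_congr rfl fun m hm => ?_
  simp only [PowerSeries.coeff_rescale, pochSeries, PowerSeries.coeff_mk]
  rw [Nat.cast_choose ℂ (mem_range_succ_iff.mp hm)]
  field_simp [Nat.factorial_ne_zero]

noncomputable def meixnerPollaczekSeries (lam φ : ℝ) (y : ℂ) : PowerSeries ℂ :=
  PowerSeries.rescale (Complex.exp (-(φ * Complex.I))) (pochSeries (lam + Complex.I * y)) *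
    PowerSeries.rescale (Complex.exp (φ * Complex.I)) (pochSeries (lam - Complex.I * y))

lemma meixnerPollaczekSeries_add (lam mu φ : ℝ) (y₁ y₂ : ℂ) :
    meixnerPollaczekSeries (lam + mu) φ (y₁ + y₂) =
      meixnerPollaczekSeries lam φ y₁ * meixnerPollaczekSeries mu φ y₂ := by
  have hplus : ((lam + mu : ℝ) : ℂ) + Complex.I * (y₁ + y₂) =
      (lam + Complex.I * y₁) + (mu + Complex.I * y₂) := by push_cast; ring
  have hminus : ((lam + mu : ℝ) : ℂ) - Complex.I * (y₁ + y₂) =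
      (lam - Complex.I * y₁) + (mu - Complex.I * y₂) := by push_cast; ring
  simp only [meixnerPollaczekSeries, hplus, hminus, pochSeries_add, map_mul]
  ring

lemma coeff_meixnerPollaczekSeries {lam : ℝ} (hlam : 0 < lam) (φ : ℝ) (y : ℂ) (n : ℕ) :
    PowerSeries.coeff n (meixnerPollaczekSeries lam φ y) = meixnerPollaczek n lam φ y := by
  set w := Complex.exp (-(2 * φ * Complex.I))
  have hexp : ∀ m ≤ n,
      Complex.exp (-(φ * Complex.I)) ^ m * Complex.exp (φ * Complex.I) ^ (n - m) =
        w ^ m * Complex.exp (n * φ * Complex.I) := by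
    intro m hm
    simp only [w, ← Complex.exp_nat_mul, ← Complex.exp_add]
    congr 1
    push_cast [Nat.cast_sub hm]
    ring
  have hsum := sum_choose_mul_pochC_mul_add_one_pow (lam + Complex.I * y) (lam - Complex.I * y)
    (w - 1) n
  rw [sub_add_cancel, show (lam + Complex.I * y) + (lam - Complex.I * y) = 2 * lam by ring] at hsum
  rw [meixnerPollaczekSeries, coeff_rescale_pochSeries_mul, meixnerPollaczek_eq_sum hlam, ← hsum,
    mul_sum, sum_div]
  refine sum_congr rfl fun m hm => ?_
  rw [mul_assoc _ (_ ^ m), hexp m (mem_range_succ_iff.mp hm)]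
  ring

/-- the convolution identity for Meixner–Pollaczek polynomials:
`P_n^{(λ+μ)}(y₁ + y₂; φ) = Σ_{k=0}^n P_k^{(λ)}(y₁; φ) P_{n-k}^{(μ)}(y₂; φ)`. -/
theorem stmt_7 (lam mu : ℝ) (hlam : 0 < lam) (hmu : 0 < mu) (φ : ℝ)
    (y₁ y₂ : ℂ) (n : ℕ) :
    meixnerPollaczek n (lam + mu) φ (y₁ + y₂) =
      ∑ k ∈ Finset.range (n + 1),
        meixnerPollaczek k lam φ y₁ * meixnerPollaczek (n - k) mu φ y₂ := by
  rw [← coeff_meixnerPollaczekSeries (add_pos hlam hmu), meixnerPollaczekSeries_add,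
    PowerSeries.coeff_mul, Nat.sum_antidiagonal_eq_sum_range_succ_mk]
  simp only [coeff_meixnerPollaczekSeries hlam, coeff_meixnerPollaczekSeries hmu]
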